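/- arXiv:2205.14812 — 5 statements merged into one kernel-verified Lean document; each statement's English description precedes it below -/
import Mathlib

section
/- If the expert closed-loop system is η-locally δ-ISS with class-K gain function γ, and for a fixed ε > 0 the test policy π satisfies sup over perturbations δ with ‖δ‖ ≤ ε of ‖π⋆(x_t^{π⋆}(ξ)+δ) − π(x_t^{π⋆}(ξ)+δ)‖ ≤ min{η, γ⁻¹(ε)} for all 0 ≤ t ≤ T−1, then the imitation gap satisfies max_{1≤t≤T} ‖x_t^π(ξ) − x_t^{π⋆}(ξ)‖ ≤ ε. -/
open scoped BigOperators

/-- Closed-loop trajectory of `x_{t+1} = f(x_t, π(x_t) + Δ_t)` from initial condition `ξ`. -/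
noncomputable def traj {d m : ℕ}
    (f : EuclideanSpace ℝ (Fin d) → EuclideanSpace ℝ (Fin m) → EuclideanSpace ℝ (Fin d))
    (π : EuclideanSpace ℝ (Fin d) → EuclideanSpace ℝ (Fin m))
    (Δ : ℕ → EuclideanSpace ℝ (Fin m)) (ξ : EuclideanSpace ℝ (Fin d)) :
    ℕ → EuclideanSpace ℝ (Fin d)
  | 0 => ξ
  | t + 1 => f (traj f π Δ ξ t) (π (traj f π Δ ξ t) + Δ t)

/-- Class-K function: continuous, strictly increasing on `[0,∞)`, vanishing at `0`. -/
def ClassK (γ : ℝ → ℝ) : Prop :=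
  ContinuousOn γ (Set.Ici 0) ∧ StrictMonoOn γ (Set.Ici 0) ∧ γ 0 = 0

/-- Class-KL function: class K in the first argument, decreasing in the second. -/
def ClassKL (β : ℝ → ℕ → ℝ) : Prop :=
  (∀ t, ClassK fun s => β s t) ∧ ∀ s, 0 ≤ s → Antitone fun t => β s t

/-- The closed-loop system under policy `πs` is `η`-locally incrementally
input-to-state stable with comparison functions `β` (class KL) and `γ` (class K). -/
def LocallyDeltaISS {d m : ℕ}
    (f : EuclideanSpace ℝ (Fin d) → EuclideanSpace ℝ (Fin m) → EuclideanSpace ℝ (Fin d))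
    (πs : EuclideanSpace ℝ (Fin d) → EuclideanSpace ℝ (Fin m))
    (η : ℝ) (β : ℝ → ℕ → ℝ) (γ : ℝ → ℝ) : Prop :=
  ClassKL β ∧ ClassK γ ∧
    ∀ (ξ₁ ξ₂ : EuclideanSpace ℝ (Fin d)) (Δ : ℕ → EuclideanSpace ℝ (Fin m)),
      (∀ t, ‖Δ t‖ ≤ η) → ∀ t, ∀ ht : 0 < t,
        ‖traj f πs Δ ξ₁ t - traj f πs (fun _ => 0) ξ₂ t‖ ≤
          β ‖ξ₁ - ξ₂‖ t +
            γ ((Finset.range t).sup' (Finset.nonempty_range_iff.mpr ht.ne') fun k => ‖Δ k‖)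

/-
Running `π` is running the expert `π⋆` with the perturbation `Δₜ = π(xₜ) − π⋆(xₜ)`. As long as
the imitation gap has stayed below `ε`, the hypothesis on `π` bounds this perturbation by
`min η γ⁻¹(ε)`, so δ-ISS of the expert (comparing with the unperturbed expert trajectory from the
same initial condition, where the `β` term vanishes) keeps the gap below `γ(γ⁻¹(ε)) ≤ ε` at the
next step; induct on `t`.
-/

section

variable {d m : ℕ}
  {f : EuclideanSpace ℝ (Fin d) → EuclideanSpace ℝ (Fin m) → EuclideanSpace ℝ (Fin d)}
  {ξ : EuclideanSpace ℝ (Fin d)}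

theorem traj_eq_traj_of_forall_lt {π π' : EuclideanSpace ℝ (Fin d) → EuclideanSpace ℝ (Fin m)}
    {Δ Δ' : ℕ → EuclideanSpace ℝ (Fin m)} {t : ℕ}
    (h : ∀ k < t, π' (traj f π Δ ξ k) + Δ' k = π (traj f π Δ ξ k) + Δ k) :
    traj f π' Δ' ξ t = traj f π Δ ξ t := by
  induction t with
  | zero => rfl
  | succ t ih =>
    have ih := ih fun k hk => h k (Nat.lt_succ_of_lt hk)
    simp only [traj, ih, h t (Nat.lt_succ_self t)]

theorem LocallyDeltaISS.norm_traj_sub_le {πs : EuclideanSpace ℝ (Fin d) → EuclideanSpace ℝ (Fin m)}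
    {η : ℝ} {β : ℝ → ℕ → ℝ} {γ : ℝ → ℝ} (hISS : LocallyDeltaISS f πs η β γ)
    {Δ : ℕ → EuclideanSpace ℝ (Fin m)} {t : ℕ} (ht : 0 < t) {c : ℝ}
    (hΔ : ∀ k < t, ‖Δ k‖ ≤ min η c) :
    ‖traj f πs Δ ξ t - traj f πs (fun _ => 0) ξ t‖ ≤ γ c := by
  obtain ⟨hKL, hK, hiss⟩ := hISS
  -- δ-ISS needs a bound on the whole sequence, but the state at time `t` only sees `Δ` before `t`.
  set Δt : ℕ → EuclideanSpace ℝ (Fin m) := fun k => if k < t then Δ k else 0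
  have hη : 0 ≤ η := (norm_nonneg _).trans ((hΔ 0 ht).trans (min_le_left _ _))
  have hΔt : ∀ k, ‖Δt k‖ ≤ η := fun k => by
    by_cases hk : k < t
    · simpa [Δt, hk] using (hΔ k hk).trans (min_le_left _ _)
    · simpa [Δt, hk] using hη
  have htraj : traj f πs Δt ξ t = traj f πs Δ ξ t :=
    traj_eq_traj_of_forall_lt fun k hk => by simp [Δt, hk]
  set S := (Finset.range t).sup' (Finset.nonempty_range_iff.mpr ht.ne') fun k => ‖Δt k‖
  have hS0 : 0 ≤ S :=
    (norm_nonneg _).trans (Finset.le_sup' (fun k => ‖Δt k‖) (Finset.mem_range.mpr ht))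
  have hSc : S ≤ c := Finset.sup'_le _ _ fun k hk => by
    rw [Finset.mem_range] at hk
    simpa [Δt, hk] using (hΔ k hk).trans (min_le_right _ _)
  calc ‖traj f πs Δ ξ t - traj f πs (fun _ => 0) ξ t‖
      ≤ β ‖ξ - ξ‖ t + γ S := htraj ▸ hiss ξ ξ Δt hΔt t ht
    _ = γ S := by rw [sub_self, norm_zero, show β 0 t = 0 from (hKL.1 t).2.2, zero_add]
    _ ≤ γ c := hK.2.1.monotoneOn hS0 (hS0.trans hSc) hSc

end

theorem stmt0_general {d m : ℕ}
    (f : EuclideanSpace ℝ (Fin d) → EuclideanSpace ℝ (Fin m) → EuclideanSpace ℝ (Fin d))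
    (πs π : EuclideanSpace ℝ (Fin d) → EuclideanSpace ℝ (Fin m))
    (η ε c : ℝ) (β : ℝ → ℕ → ℝ) (γ : ℝ → ℝ) (T : ℕ) (ξ : EuclideanSpace ℝ (Fin d))
    (hISS : LocallyDeltaISS f πs η β γ)
    (hε : 0 < ε) (hγc : γ c ≤ ε)
    (hclose : ∀ t < T, ∀ δv : EuclideanSpace ℝ (Fin d), ‖δv‖ ≤ ε →
      ‖πs (traj f πs (fun _ => 0) ξ t + δv) - π (traj f πs (fun _ => 0) ξ t + δv)‖ ≤ min η c) :
    ∀ t, 1 ≤ t → t ≤ T →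
      ‖traj f π (fun _ => 0) ξ t - traj f πs (fun _ => 0) ξ t‖ ≤ ε := by
  set x := traj f π (fun _ => 0) ξ
  set y := traj f πs (fun _ => 0) ξ
  intro t
  induction t using Nat.strong_induction_on with
  | _ t IH =>
  intro ht htT
  have hgap : ∀ k < t, ‖x k - y k‖ ≤ ε := fun k hk => by
    rcases Nat.eq_zero_or_pos k with rfl | hk0
    · simpa [x, y, traj] using hε.le
    · exact IH k hk hk0 (hk.le.trans htT)
  have hΔ : ∀ k < t, ‖π (x k) - πs (x k)‖ ≤ min η c := fun k hk => by
    simpa [norm_sub_rev] using hclose k (hk.trans_le htT) (x k - y k) (hgap k hk)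
  have hx : traj f πs (fun k => π (x k) - πs (x k)) ξ t = x t :=
    traj_eq_traj_of_forall_lt fun k _ => by simp [x]
  calc ‖x t - y t‖ = ‖traj f πs (fun k => π (x k) - πs (x k)) ξ t - y t‖ := by rw [hx]
    _ ≤ γ c := hISS.norm_traj_sub_le ht hΔ
    _ ≤ ε := hγc

/-- Proposition 1 (TaSIL): if the expert closed-loop system is `η`-locally δ-ISS with class-K
gain `γ`, and the test policy `π` is within `min{η, γ⁻¹(ε)}` of the expert `π⋆` in an
`ε`-tube around the expert trajectory, then the imitation gap is at most `ε`.
Here `c` plays the role of `γ⁻¹(ε)`, i.e. `0 ≤ c` and `γ c ≤ ε`. -/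
theorem stmt0 {d m : ℕ}
    (f : EuclideanSpace ℝ (Fin d) → EuclideanSpace ℝ (Fin m) → EuclideanSpace ℝ (Fin d))
    (πs π : EuclideanSpace ℝ (Fin d) → EuclideanSpace ℝ (Fin m))
    (η ε c : ℝ) (β : ℝ → ℕ → ℝ) (γ : ℝ → ℝ) (T : ℕ) (ξ : EuclideanSpace ℝ (Fin d))
    (hISS : LocallyDeltaISS f πs η β γ)
    (hη : 0 < η) (hε : 0 < ε) (hc : 0 ≤ c) (hγc : γ c ≤ ε)
    (hclose : ∀ t < T, ∀ δv : EuclideanSpace ℝ (Fin d), ‖δv‖ ≤ ε →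
      ‖πs (traj f πs (fun _ => 0) ξ t + δv) - π (traj f πs (fun _ => 0) ξ t + δv)‖ ≤ min η c) :
    ∀ t, 1 ≤ t → t ≤ T →
      ‖traj f π (fun _ => 0) ξ t - traj f πs (fun _ => 0) ξ t‖ ≤ ε :=
  stmt0_general f πs π η ε c β γ T ξ hISS hε hγc hclose
end

section
/- Let γ: [0,∞) → [0,∞) be continuous, strictly increasing with γ(0)=0 and γ(x) ≤ C x^{1+r} for all x ∈ [0,1], with r > 0 and C > 0. Then with μ = 2^{1+r} C, there exists α > 0 such that for all 0 ≤ x ≤ α, 2L x + (x/μ)^{1/(1+r)} ≤ γ⁻¹(x), for any fixed Lipschitz constant L ≥ 1/2 (where α can be taken of order (L^{1+r} C)^{-1/r} up to absolute constants). -/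
/-! Since `x ↦ x^{1+r}` is superlinear at `0`, a linear term `K x` is eventually dominated by
`(x/C)^{1/(1+r)}`, namely as soon as `x^r ≤ (C K^{1+r})⁻¹`. Any preimage `y ≤ 1` of `x`
under `γ` satisfies `x ≤ C y^{1+r}`, i.e. `y ≥ (x/C)^{1/(1+r)}`, and dividing by `μ = 2^{1+r} C`
instead of `C` halves this lower bound, leaving the other half to absorb `2 L x`. -/

namespace Real

variable {x y C K r : ℝ}

lemma div_rpow_one_div_le_of_le_mul_rpow (hx : 0 ≤ x) (hy : 0 ≤ y) (hC : 0 < C) (hr : 0 < r)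
    (h : x ≤ C * y ^ r) : (x / C) ^ (1 / r) ≤ y := by
  rw [one_div, rpow_inv_le_iff_of_pos (div_nonneg hx hC.le) hy hr, div_le_iff₀' hC]
  exact h

lemma mul_le_div_rpow_one_div_one_add (hx : 0 ≤ x) (hC : 0 < C) (hK : 0 < K) (hr : 0 < r)
    (hxr : x ≤ ((C * K ^ (1 + r))⁻¹) ^ r⁻¹) : K * x ≤ (x / C) ^ (1 / (1 + r)) := by
  have hKr : 0 < K ^ (1 + r) := rpow_pos_of_pos hK _
  have hxr' : x ^ r ≤ (C * K ^ (1 + r))⁻¹ := by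
    rw [← rpow_inv_rpow (x := (C * K ^ (1 + r))⁻¹) (by positivity) hr.ne']
    exact rpow_le_rpow hx hxr hr.le
  rw [one_div, le_rpow_inv_iff_of_pos (by positivity) (by positivity) (by linarith),
    mul_rpow hK.le hx, rpow_add' hx (by linarith), rpow_one]
  calc K ^ (1 + r) * (x * x ^ r)
      ≤ K ^ (1 + r) * (x * (C * K ^ (1 + r))⁻¹) := by gcongr
    _ = x / C := by field_simp

lemma div_two_rpow_mul_rpow_one_div (hx : 0 ≤ x) (hC : 0 < C) (hr : 0 < r) :
    (x / (2 ^ r * C)) ^ (1 / r) = (x / C) ^ (1 / r) / 2 := by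
  rw [div_mul_eq_div_div_swap, div_rpow (by positivity) (by positivity), ← rpow_mul zero_le_two,
    mul_one_div_cancel hr.ne', rpow_one]

end Real

lemma ClassK.le_one_of_map_le {γ : ℝ → ℝ} (hK : ClassK γ) {y : ℝ} (hy : 0 ≤ y) (h : γ y ≤ γ 1) :
    y ≤ 1 :=
  (hK.2.1.le_iff_le hy (Set.mem_Ici.2 zero_le_one)).1 h

lemma ClassK.map_one_pos {γ : ℝ → ℝ} (hK : ClassK γ) : 0 < γ 1 :=
  hK.2.2 ▸ hK.2.1 Set.self_mem_Ici (Set.mem_Ici.2 zero_le_one) zero_lt_one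

open Real in
/-- `γ⁻¹(x)` is encoded as an arbitrary `y ≥ 0` with `γ y = x`. -/
theorem stmt1 (γ : ℝ → ℝ) (C r L : ℝ)
    (hK : ClassK γ) (hC : 0 < C) (hr : 0 < r) (hL : 1 / 2 ≤ L)
    (hγ : ∀ x : ℝ, 0 ≤ x → x ≤ 1 → γ x ≤ C * x ^ (1 + r)) :
    ∃ α > 0, ∀ x : ℝ, 0 ≤ x → x ≤ α → ∀ y : ℝ, 0 ≤ y → γ y = x →
      2 * L * x + (x / (2 ^ (1 + r) * C)) ^ (1 / (1 + r)) ≤ y := by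
  have h4L : 0 < 4 * L := by linarith
  set B := ((C * (4 * L) ^ (1 + r))⁻¹) ^ r⁻¹
  have hB : 0 < B := by positivity
  refine ⟨min B (γ 1), lt_min hB hK.map_one_pos, fun x hx hxα y hy hxy => ?_⟩
  have hy1 : y ≤ 1 := hK.le_one_of_map_le hy (hxy ▸ hxα.trans (min_le_right _ _))
  have hlin : 4 * L * x ≤ (x / C) ^ (1 / (1 + r)) :=
    mul_le_div_rpow_one_div_one_add hx hC h4L hr (hxα.trans (min_le_left _ _))
  have hroot : (x / C) ^ (1 / (1 + r)) ≤ y :=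
    div_rpow_one_div_le_of_le_mul_rpow hx hy hC (by linarith) (hxy ▸ hγ y hy hy1)
  rw [div_two_rpow_mul_rpow_one_div hx hC (by linarith)]
  linarith
end

section
/- Fix a test policy π, expert policy π⋆, both L_π-Lipschitz, and initial condition ξ. Suppose the expert closed-loop system is η-locally δ-ISS with class-K gain γ, and constants μ, α > 0 satisfy 2L_π x + (x/μ)^{1/(1+r)} ≤ γ⁻¹(x) for all 0 ≤ x ≤ α. If max_{0≤t≤T−1} μ‖Δ_t^{π⋆}(ξ;π)‖^{1+r} ≤ α and max_{0≤t≤T−1} 2L_π μ‖Δ_t^{π⋆}(ξ;π)‖^{1+r} + ‖Δ_t^{π⋆}(ξ;π)‖ ≤ η, then for all 1 ≤ t ≤ T, ‖x_t^{π⋆}(ξ) − x_t^{π}(ξ)‖ ≤ max_{0≤k≤t−1} μ‖Δ_k^{π⋆}(ξ;π)‖^{1+r}. -/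
open scoped BigOperators

private lemma traj_congr {d m : ℕ}
    (f : EuclideanSpace ℝ (Fin d) → EuclideanSpace ℝ (Fin m) → EuclideanSpace ℝ (Fin d))
    (π : EuclideanSpace ℝ (Fin d) → EuclideanSpace ℝ (Fin m))
    (Δ₁ Δ₂ : ℕ → EuclideanSpace ℝ (Fin m)) (ξ : EuclideanSpace ℝ (Fin d)) :
    ∀ t, (∀ k < t, Δ₁ k = Δ₂ k) → traj f π Δ₁ ξ t = traj f π Δ₂ ξ t
  | 0, _ => rfl
  | (t+1), h => by
    have ih := traj_congr f π Δ₁ Δ₂ ξ t (fun k hk => h k (Nat.lt_succ_of_lt hk))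
    simp only [traj, ih, h t (Nat.lt_succ_self t)]

private lemma traj_switch {d m : ℕ}
    (f : EuclideanSpace ℝ (Fin d) → EuclideanSpace ℝ (Fin m) → EuclideanSpace ℝ (Fin d))
    (πs π : EuclideanSpace ℝ (Fin d) → EuclideanSpace ℝ (Fin m))
    (ξ : EuclideanSpace ℝ (Fin d)) :
    ∀ t, traj f πs (fun k => π (traj f π (fun _ => 0) ξ k)
        - πs (traj f π (fun _ => 0) ξ k)) ξ t = traj f π (fun _ => 0) ξ t
  | 0 => rfl
  | (t+1) => by
    have ih := traj_switch f πs π ξ t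
    simp only [traj, ih, add_zero, add_sub_cancel]

/-- Theorem 3 of TaSIL (sub-linear imitation gap / rapidly decaying class-K gains).
`Δ t = π(x_t^{π⋆}(ξ)) − π⋆(x_t^{π⋆}(ξ))` is the discrepancy along the expert trajectory;
the relation `2 L_π x + (x/μ)^{1/(1+r)} ≤ γ⁻¹(x)` on `[0,α]` is expressed in the
equivalent form `γ (2 L_π x + (x/μ)^{1/(1+r)}) ≤ x`. -/
theorem stmt2 {d m : ℕ}
    (f : EuclideanSpace ℝ (Fin d) → EuclideanSpace ℝ (Fin m) → EuclideanSpace ℝ (Fin d))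
    (πs π : EuclideanSpace ℝ (Fin d) → EuclideanSpace ℝ (Fin m))
    (η r Lπ μ α : ℝ) (β : ℝ → ℕ → ℝ) (γ : ℝ → ℝ) (T : ℕ) (ξ : EuclideanSpace ℝ (Fin d))
    (hISS : LocallyDeltaISS f πs η β γ)
    (hη : 0 < η) (hr : 0 < r) (hμ : 0 < μ) (hα : 0 < α) (hLπ : 0 ≤ Lπ)
    (hlips : ∀ x y, ‖πs x - πs y‖ ≤ Lπ * ‖x - y‖)
    (hlip : ∀ x y, ‖π x - π y‖ ≤ Lπ * ‖x - y‖)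
    (hrel : ∀ x : ℝ, 0 ≤ x → x ≤ α →
      γ (2 * Lπ * x + (x / μ) ^ (1 / (1 + r))) ≤ x)
    (Δ : ℕ → EuclideanSpace ℝ (Fin m))
    (hΔdef : ∀ t, Δ t =
      π (traj f πs (fun _ => 0) ξ t) - πs (traj f πs (fun _ => 0) ξ t))
    (hcond1 : ∀ t < T, μ * ‖Δ t‖ ^ (1 + r) ≤ α)
    (hcond2 : ∀ t < T, 2 * Lπ * μ * ‖Δ t‖ ^ (1 + r) + ‖Δ t‖ ≤ η) :
    ∀ t, ∀ ht : 1 ≤ t, t ≤ T →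
      ‖traj f πs (fun _ => 0) ξ t - traj f π (fun _ => 0) ξ t‖ ≤
        (Finset.range t).sup' (Finset.nonempty_range_iff.mpr (by omega))
          fun k => μ * ‖Δ k‖ ^ (1 + r) := by
  obtain ⟨hβKL, hγK, hISS'⟩ := hISS
  have hp : (0:ℝ) < 1 + r := by linarith
  set X : ℕ → EuclideanSpace ℝ (Fin d) := traj f π (fun _ => 0) ξ with hX
  set Xs : ℕ → EuclideanSpace ℝ (Fin d) := traj f πs (fun _ => 0) ξ with hXs
  -- monotonicity and nonnegativity of the running max
  have hmono : ∀ a b : ℕ, ∀ ha : 0 < a, ∀ hab : a ≤ b,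
      (Finset.range a).sup' (Finset.nonempty_range_iff.mpr ha.ne')
          (fun j => μ * ‖Δ j‖ ^ (1 + r)) ≤
        (Finset.range b).sup' (Finset.nonempty_range_iff.mpr (ha.trans_le hab).ne')
          (fun j => μ * ‖Δ j‖ ^ (1 + r)) := by
    intro a b ha hab
    apply Finset.sup'_le
    intro j hj
    exact Finset.le_sup' (fun j => μ * ‖Δ j‖ ^ (1 + r)) (Finset.mem_range.mpr
      (lt_of_lt_of_le (Finset.mem_range.mp hj) hab))
  have hnonneg : ∀ a : ℕ, ∀ ha : 0 < a,
      (0:ℝ) ≤ (Finset.range a).sup' (Finset.nonempty_range_iff.mpr ha.ne')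
        (fun j => μ * ‖Δ j‖ ^ (1 + r)) := by
    intro a ha
    refine le_trans ?_ (Finset.le_sup' (fun j => μ * ‖Δ j‖ ^ (1 + r)) (Finset.mem_range.mpr ha))
    exact mul_nonneg hμ.le (Real.rpow_nonneg (norm_nonneg _) _)
  -- discrepancy bound along the test trajectory
  have key : ∀ k, ‖π (X k) - πs (X k)‖ ≤ 2 * Lπ * ‖Xs k - X k‖ + ‖Δ k‖ := by
    intro k
    have hsplit : π (X k) - πs (X k)
        = (π (X k) - π (Xs k)) + Δ k + (πs (Xs k) - πs (X k)) := by
      rw [hΔdef k]; abel_nf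
    calc ‖π (X k) - πs (X k)‖
        ≤ ‖π (X k) - π (Xs k)‖ + ‖Δ k‖ + ‖πs (Xs k) - πs (X k)‖ := by
          rw [hsplit]; exact norm_add₃_le
      _ ≤ Lπ * ‖X k - Xs k‖ + ‖Δ k‖ + Lπ * ‖Xs k - X k‖ :=
          add_le_add (add_le_add (hlip _ _) le_rfl) (hlips _ _)
      _ = 2 * Lπ * ‖Xs k - X k‖ + ‖Δ k‖ := by rw [norm_sub_rev (X k)]; ring
  intro t
  induction t using Nat.strong_induction_on with
  | _ t IH =>
  intro ht htT
  have ht0 : 0 < t := ht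
  -- error bound from the induction hypothesis, shifted by one
  have herr : ∀ k, k < t → ‖Xs k - X k‖ ≤
      (Finset.range (k+1)).sup' (Finset.nonempty_range_iff.mpr (Nat.succ_ne_zero k))
        (fun j => μ * ‖Δ j‖ ^ (1 + r)) := by
    intro k hk
    rcases Nat.eq_zero_or_pos k with h0 | hk0
    · subst h0
      have : ‖Xs 0 - X 0‖ = 0 := by
        show ‖ξ - ξ‖ = 0
        rw [sub_self, norm_zero]
      rw [this]
      exact hnonneg 1 one_pos
    · exact (IH k hk hk0 (le_trans hk.le htT)).trans (hmono k (k+1) hk0 (Nat.le_succ k))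
  -- the truncated perturbation along the test trajectory
  set D : ℕ → EuclideanSpace ℝ (Fin m) :=
    fun k => if k < t then π (X k) - πs (X k) else 0 with hD
  have hDη : ∀ k, ‖D k‖ ≤ η := by
    intro k
    by_cases hk : k < t
    · simp only [hD, if_pos hk]
      obtain ⟨j, hjmem, hjmax⟩ :=
        Finset.exists_max_image (Finset.range (k+1)) (fun j => ‖Δ j‖)
          ⟨0, Finset.mem_range.mpr (Nat.succ_pos k)⟩
      have hjT : j < T :=
        lt_of_lt_of_le (Finset.mem_range.mp hjmem) (le_trans hk htT)
      have h1 : ‖Xs k - X k‖ ≤ μ * ‖Δ j‖ ^ (1 + r) := by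
        refine (herr k hk).trans (Finset.sup'_le _ _ fun i hi => ?_)
        exact mul_le_mul_of_nonneg_left
          (Real.rpow_le_rpow (norm_nonneg _) (hjmax i hi) hp.le) hμ.le
      have h2 : ‖Δ k‖ ≤ ‖Δ j‖ := hjmax k (Finset.mem_range.mpr (Nat.lt_succ_self k))
      have h3 := hcond2 j hjT
      calc ‖π (X k) - πs (X k)‖ ≤ 2 * Lπ * ‖Xs k - X k‖ + ‖Δ k‖ := key k
        _ ≤ 2 * Lπ * (μ * ‖Δ j‖ ^ (1 + r)) + ‖Δ j‖ :=
            add_le_add (mul_le_mul_of_nonneg_left h1 (by linarith)) h2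
        _ ≤ η := by linarith
    · simp only [hD, if_neg hk, norm_zero]
      exact hη.le
  -- the test trajectory is the expert closed loop driven by D
  have hXt : traj f πs D ξ t = X t := by
    rw [traj_congr f πs D (fun k => π (X k) - πs (X k)) ξ t
      (fun k hk => by simp only [hD, if_pos hk])]
    exact traj_switch f πs π ξ t
  have hiss := hISS' ξ ξ D hDη t ht0
  rw [hXt] at hiss
  have hβ0 : β ‖ξ - ξ‖ t = 0 := by
    rw [sub_self, norm_zero]; exact (hβKL.1 t).2.2
  rw [hβ0, zero_add] at hiss
  -- abbreviate the running max at time t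
  set Mt : ℝ := (Finset.range t).sup' (Finset.nonempty_range_iff.mpr ht0.ne')
    (fun j => μ * ‖Δ j‖ ^ (1 + r)) with hMt
  have hMt0 : 0 ≤ Mt := hnonneg t ht0
  have hMtα : Mt ≤ α := by
    apply Finset.sup'_le
    intro k hk
    exact hcond1 k (lt_of_lt_of_le (Finset.mem_range.mp hk) htT)
  -- bound the sup of the perturbations
  have hS : (Finset.range t).sup' (Finset.nonempty_range_iff.mpr ht0.ne')
      (fun k => ‖D k‖) ≤ 2 * Lπ * Mt + (Mt / μ) ^ (1 / (1 + r)) := by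
    apply Finset.sup'_le
    intro k hk
    replace hk := Finset.mem_range.mp hk
    simp only [hD, if_pos hk]
    have h1 : ‖Xs k - X k‖ ≤ Mt :=
      (herr k hk).trans (hmono (k+1) t (Nat.succ_pos k) hk)
    have h2 : ‖Δ k‖ ≤ (Mt / μ) ^ (1 / (1 + r)) := by
      have ha : μ * ‖Δ k‖ ^ (1 + r) ≤ Mt := by
        rw [hMt]
        exact Finset.le_sup' (fun j => μ * ‖Δ j‖ ^ (1 + r)) (Finset.mem_range.mpr hk)
      have hb : ‖Δ k‖ ^ (1 + r) ≤ Mt / μ := by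
        rw [le_div_iff₀ hμ]; linarith [ha, mul_comm μ (‖Δ k‖ ^ (1 + r))]
      have hc : (‖Δ k‖ ^ (1 + r)) ^ (1 / (1 + r)) ≤ (Mt / μ) ^ (1 / (1 + r)) :=
        Real.rpow_le_rpow (Real.rpow_nonneg (norm_nonneg _) _) hb (by positivity)
      rwa [← Real.rpow_mul (norm_nonneg _), mul_one_div, div_self hp.ne',
        Real.rpow_one] at hc
    calc ‖π (X k) - πs (X k)‖ ≤ 2 * Lπ * ‖Xs k - X k‖ + ‖Δ k‖ := key k
      _ ≤ 2 * Lπ * Mt + (Mt / μ) ^ (1 / (1 + r)) :=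
          add_le_add (mul_le_mul_of_nonneg_left h1 (by linarith)) h2
  have hS0 : (0:ℝ) ≤ (Finset.range t).sup' (Finset.nonempty_range_iff.mpr ht0.ne')
      (fun k => ‖D k‖) :=
    le_trans (norm_nonneg (D 0)) (Finset.le_sup' (fun k => ‖D k‖) (Finset.mem_range.mpr ht0))
  have hRHS0 : (0:ℝ) ≤ 2 * Lπ * Mt + (Mt / μ) ^ (1 / (1 + r)) :=
    add_nonneg (mul_nonneg (by linarith) hMt0)
      (Real.rpow_nonneg (div_nonneg hMt0 hμ.le) _)
  have hγle : γ ((Finset.range t).sup' (Finset.nonempty_range_iff.mpr ht0.ne')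
      (fun k => ‖D k‖)) ≤ γ (2 * Lπ * Mt + (Mt / μ) ^ (1 / (1 + r))) :=
    hγK.2.1.monotoneOn (Set.mem_Ici.mpr hS0) (Set.mem_Ici.mpr hRHS0) hS
  calc ‖Xs t - X t‖ = ‖X t - Xs t‖ := norm_sub_rev _ _
    _ ≤ γ ((Finset.range t).sup' (Finset.nonempty_range_iff.mpr ht0.ne')
        (fun k => ‖D k‖)) := hiss
    _ ≤ γ (2 * Lπ * Mt + (Mt / μ) ^ (1 / (1 + r))) := hγle
    _ ≤ Mt := hrel Mt hMt0 hMtα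
end

section
/- For any R ∈ (0,1], constants B, L with BL ≥ 1, and q ≥ 1: ∫₀^R sqrt(q log(6BL/ε)) dε ≤ 2√2 · R · √q · sqrt(log(6BL/R)). -/
/-!
Split `log (6BL/ε) = log (6BL/R) + log (R/ε)` and use `√(a + b) ≤ √a + √b` together with
`log x ≤ x`: the integrand is at most `√q (√(log (6BL/R)) + √(R/ε))`, whose integral over
`(0, R)` is `√q R (√(log (6BL/R)) + 2)`. Since `6BL/R ≥ 6`, `A := log (6BL/R) ≥ 4/3`, and then
`√A + 2 ≤ √2 √(A + 4) ≤ √2 √(4A)`.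
-/

open MeasureTheory Set Real

namespace Real

lemma sqrt_add_le_sqrt_add_sqrt {a b : ℝ} (ha : 0 ≤ a) (hb : 0 ≤ b) : √(a + b) ≤ √a + √b := by
  rw [sqrt_le_left (by positivity)]
  nlinarith [sq_sqrt ha, sq_sqrt hb, sqrt_nonneg a, sqrt_nonneg b]

lemma sqrt_add_sqrt_le_sqrt_two_mul_sqrt_add {a b : ℝ} (ha : 0 ≤ a) (hb : 0 ≤ b) :
    √a + √b ≤ √2 * √(a + b) := by
  rw [← sqrt_mul zero_le_two, le_sqrt (by positivity) (by positivity)]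
  nlinarith [sq_sqrt ha, sq_sqrt hb, sq_nonneg (√a - √b)]

lemma four_thirds_lt_log_six : (4 / 3 : ℝ) < log 6 := by
  have h4 : log 4 = 2 * log 2 := by
    rw [show (4 : ℝ) = 2 ^ 2 by norm_num, log_pow, Nat.cast_ofNat]
  have h46 : log 4 ≤ log 6 := log_le_log (by norm_num) (by norm_num)
  linarith [log_two_gt_d9]

lemma sqrt_add_two_le_two_mul_sqrt_two_mul_sqrt {A : ℝ} (hA : 4 / 3 ≤ A) :
    √A + 2 ≤ 2 * √2 * √A :=
  calc √A + 2 = √A + √4 := by rw [show (4 : ℝ) = 2 ^ 2 by norm_num, sqrt_sq zero_le_two]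
    _ ≤ √2 * √(A + 4) := sqrt_add_sqrt_le_sqrt_two_mul_sqrt_add (by linarith) (by norm_num)
    _ ≤ √2 * √(4 * A) := by gcongr; linarith
    _ = 2 * √2 * √A := by
      rw [sqrt_mul zero_le_four, show (4 : ℝ) = 2 ^ 2 by norm_num, sqrt_sq zero_le_two]; ring

end Real

lemma sqrt_div_eq_sqrt_mul_rpow_neg_half {R ε : ℝ} (hR : 0 ≤ R) (hε : 0 ≤ ε) :
    √(R / ε) = √R * ε ^ (-(1 / 2) : ℝ) := by
  rw [sqrt_div hR, div_eq_mul_inv, rpow_neg hε, ← sqrt_eq_rpow]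

lemma integrableOn_sqrt_div_Ioo {R : ℝ} (hR : 0 ≤ R) (a : ℝ) :
    IntegrableOn (fun ε ↦ √(R / ε)) (Ioo 0 a) := by
  have h : IntegrableOn (fun ε : ℝ ↦ √R * ε ^ (-(1 / 2) : ℝ)) (Ioo 0 a) :=
    ((intervalIntegral.intervalIntegrable_rpow' (by norm_num)).const_mul _).1.mono_set
      Ioo_subset_Ioc_self
  exact h.congr_fun (fun ε hε ↦ (sqrt_div_eq_sqrt_mul_rpow_neg_half hR hε.1.le).symm)
    measurableSet_Ioo

lemma integral_sqrt_div_Ioo {R : ℝ} (hR : 0 ≤ R) : ∫ ε in Ioo 0 R, √(R / ε) = 2 * R := by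
  rw [setIntegral_congr_fun measurableSet_Ioo
      (fun ε hε ↦ sqrt_div_eq_sqrt_mul_rpow_neg_half hR hε.1.le),
    ← integral_Ioc_eq_integral_Ioo, ← intervalIntegral.integral_of_le hR,
    intervalIntegral.integral_const_mul, integral_rpow (Or.inl (by norm_num)),
    zero_rpow (by norm_num), show (-(1 / 2) : ℝ) + 1 = 1 / 2 by norm_num, ← sqrt_eq_rpow]
  linear_combination (2 : ℝ) * mul_self_sqrt hR

theorem integral_sqrt_add_log_div_le {a R : ℝ} (ha : 0 ≤ a) (hR : 0 ≤ R) :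
    ∫ ε in Ioo 0 R, √(a + log (R / ε)) ≤ (√a + 2) * R := by
  have hbound : ∀ ε ∈ Ioo 0 R, √(a + log (R / ε)) ≤ √a + √(R / ε) := fun ε ⟨hε, hεR⟩ ↦
    (sqrt_add_le_sqrt_add_sqrt ha (log_nonneg ((one_le_div hε).2 hεR.le))).trans
      (add_le_add_right (sqrt_le_sqrt (log_le_self (div_nonneg hR hε.le))) _)
  have hconst : IntegrableOn (fun _ ↦ √a) (Ioo 0 R) := integrableOn_const measure_Ioo_lt_top.ne
  have hint : IntegrableOn (fun ε ↦ √(R / ε)) (Ioo 0 R) := integrableOn_sqrt_div_Ioo hR R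
  calc ∫ ε in Ioo 0 R, √(a + log (R / ε))
      ≤ ∫ ε in Ioo 0 R, (√a + √(R / ε)) :=
        integral_mono_of_nonneg (.of_forall fun _ ↦ sqrt_nonneg _)
          (hconst.add hint)
          ((ae_restrict_iff' measurableSet_Ioo).2 (.of_forall hbound))
    _ = (√a + 2) * R := by
      rw [integral_add hconst hint, setIntegral_const,
        integral_sqrt_div_Ioo hR, Real.volume_real_Ioo_of_le hR, sub_zero, smul_eq_mul]
      ring

theorem stmt11_general (q : ℕ) (B L R : ℝ)
    (hBL : 1 ≤ B * L) (hR0 : 0 < R) (hR1 : R ≤ 1) :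
    (∫ ε in Set.Ioo (0 : ℝ) R, Real.sqrt (q * Real.log (6 * B * L / ε))) ≤
      2 * Real.sqrt 2 * R * Real.sqrt q * Real.sqrt (Real.log (6 * B * L / R)) := by
  set A := log (6 * B * L / R)
  have hA : 4 / 3 ≤ A := four_thirds_lt_log_six.le.trans <| log_le_log (by norm_num) <| by
    rw [le_div_iff₀ hR0]; nlinarith
  have hsplit : EqOn (fun ε ↦ √(q * log (6 * B * L / ε))) (fun ε ↦ √q * √(A + log (R / ε)))
      (Ioo 0 R) := by
    rintro ε ⟨hε, -⟩
    have hBL' : 6 * B * L ≠ 0 := by nlinarith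
    simp only
    rw [sqrt_mul (Nat.cast_nonneg q), ← log_mul (by positivity) (by positivity),
      div_mul_div_cancel₀ hR0.ne']
  calc ∫ ε in Ioo 0 R, √(q * log (6 * B * L / ε))
      = √q * ∫ ε in Ioo 0 R, √(A + log (R / ε)) := by
        rw [setIntegral_congr_fun measurableSet_Ioo hsplit, integral_const_mul]
    _ ≤ √q * ((√A + 2) * R) := by gcongr; exact integral_sqrt_add_log_div_le (by linarith) hR0.le
    _ ≤ √q * (2 * √2 * √A * R) := by gcongr; exact sqrt_add_two_le_two_mul_sqrt_two_mul_sqrt hA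
    _ = 2 * √2 * R * √q * √A := by ring

/-- Entropy-integral computation used in the local Rademacher complexity analysis of TaSIL:
for `R ∈ (0,1]`, `BL ≥ 1` and `q ≥ 1`,
`∫₀^R √(q log(6BL/ε)) dε ≤ 2√2 · R · √q · √(log(6BL/R))`. -/
theorem stmt11 (q : ℕ) (hq : 1 ≤ q) (B L R : ℝ) (hB : 0 < B) (hL : 0 < L)
    (hBL : 1 ≤ B * L) (hR0 : 0 < R) (hR1 : R ≤ 1) :
    (∫ ε in Set.Ioo (0 : ℝ) R, Real.sqrt (q * Real.log (6 * B * L / ε))) ≤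
      2 * Real.sqrt 2 * R * Real.sqrt q * Real.sqrt (Real.log (6 * B * L / R)) :=
  stmt11_general q B L R hBL hR0 hR1
end

section
/- For η ∈ [0,1), the discrete-time system x_{t+1} = η x_t + (1−η)·(γ(‖h(x_t)+u_t‖)/‖h(x_t)+u_t‖)·(h(x_t)+u_t) with control u_t, evaluated along trajectories from initial conditions ξ₁ (with inputs u_k) and ξ₂ (with inputs chosen so h(x_k)+u_k = 0, i.e., under the expert π⋆(x) = −h(x)), satisfies ‖x_t(ξ₁) − x_t(ξ₂)‖ ≤ η^t ‖ξ₁ − ξ₂‖ + γ(max_{0≤k≤t−1} ‖h(x_k)+u_k‖), where γ is any class-K function. -/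
open scoped BigOperators

/-- δ-ISS of the synthetic TaSIL benchmark system
`x_{t+1} = η x_t + (1−η)·(γ(‖h(x_t)+u_t‖)/‖h(x_t)+u_t‖)·(h(x_t)+u_t)` around the expert
`π⋆(x) = −h(x)`: the trajectory `x1` from `ξ₁` with inputs `u` and the expert trajectory
`x2` from `ξ₂` (where `h(x)+u = 0`, hence `x_{t+1} = η x_t`) satisfy
`‖x1_t − x2_t‖ ≤ η^t ‖ξ₁−ξ₂‖ + γ(max_{k<t} ‖h(x1_k)+u_k‖)`.
(The factor `(γ(‖v‖)/‖v‖) • v` is `0` when `v = 0`, as `v = 0` makes the smul vanish.) -/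
theorem stmt14 {d : ℕ} (η : ℝ) (hη0 : 0 ≤ η) (hη1 : η < 1)
    (h : EuclideanSpace ℝ (Fin d) → EuclideanSpace ℝ (Fin d))
    (γ : ℝ → ℝ) (hγ : ClassK γ)
    (u : ℕ → EuclideanSpace ℝ (Fin d)) (ξ₁ ξ₂ : EuclideanSpace ℝ (Fin d))
    (x1 x2 : ℕ → EuclideanSpace ℝ (Fin d))
    (hx10 : x1 0 = ξ₁)
    (hx1 : ∀ t, x1 (t + 1) = η • x1 t + (1 - η) •
      ((γ ‖h (x1 t) + u t‖ / ‖h (x1 t) + u t‖) • (h (x1 t) + u t)))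
    (hx20 : x2 0 = ξ₂)
    (hx2 : ∀ t, x2 (t + 1) = η • x2 t) :
    ∀ t, ∀ ht : 0 < t,
      ‖x1 t - x2 t‖ ≤ η ^ t * ‖ξ₁ - ξ₂‖ +
        γ ((Finset.range t).sup' (Finset.nonempty_range_iff.mpr ht.ne')
          fun k => ‖h (x1 k) + u k‖) := by
  obtain ⟨-, hmono, hγ0⟩ := hγ
  have hmono' := hmono.monotoneOn
  have hγnn : ∀ r : ℝ, 0 ≤ r → 0 ≤ γ r := by
    intro r hr
    have := hmono' Set.self_mem_Ici (Set.mem_Ici.mpr hr) hr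
    simpa [hγ0] using this
  have hkey : ∀ w : EuclideanSpace ℝ (Fin d), ‖(γ ‖w‖ / ‖w‖) • w‖ = γ ‖w‖ := by
    intro w
    by_cases hw : w = 0
    · simp [hw, hγ0]
    · rw [norm_smul, Real.norm_eq_abs, abs_div, abs_norm,
        div_mul_cancel₀ _ (norm_ne_zero_iff.mpr hw), abs_of_nonneg (hγnn _ (norm_nonneg w))]
  intro t
  induction t with
  | zero => intro ht; exact absurd ht (lt_irrefl 0)
  | succ n ih =>
    intro _
    have hne : (Finset.range (n+1)).Nonempty := Finset.nonempty_range_iff.mpr (Nat.succ_ne_zero n)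
    set M := (Finset.range (n+1)).sup' hne (fun k => ‖h (x1 k) + u k‖) with hMdef
    have hMle : ∀ k, k < n + 1 → ‖h (x1 k) + u k‖ ≤ M := by
      intro k hk; rw [hMdef]; exact Finset.le_sup' (fun k => ‖h (x1 k) + u k‖) (Finset.mem_range.mpr hk)
    have hM0 : 0 ≤ M := le_trans (norm_nonneg _) (hMle 0 n.succ_pos)
    have hγM : 0 ≤ γ M := hγnn M hM0
    have hγvM : γ ‖h (x1 n) + u n‖ ≤ γ M :=
      hmono' (Set.mem_Ici.mpr (norm_nonneg _)) (Set.mem_Ici.mpr hM0) (hMle n (lt_add_one n))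
    have step : ‖x1 (n+1) - x2 (n+1)‖ ≤ η * ‖x1 n - x2 n‖ + (1-η) * γ M := by
      rw [hx1 n, hx2 n]
      have heq : η • x1 n + (1 - η) •
          ((γ ‖h (x1 n) + u n‖ / ‖h (x1 n) + u n‖) • (h (x1 n) + u n)) - η • x2 n
          = η • (x1 n - x2 n) + (1 - η) •
          ((γ ‖h (x1 n) + u n‖ / ‖h (x1 n) + u n‖) • (h (x1 n) + u n)) := by
        rw [smul_sub]; abel
      rw [heq]
      calc ‖_ + _‖ ≤ ‖η • (x1 n - x2 n)‖ + ‖(1-η) •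
          ((γ ‖h (x1 n) + u n‖ / ‖h (x1 n) + u n‖) • (h (x1 n) + u n))‖ := norm_add_le _ _
        _ = η * ‖x1 n - x2 n‖ + (1-η) * γ ‖h (x1 n) + u n‖ := by
            rw [norm_smul, norm_smul, hkey, Real.norm_eq_abs, Real.norm_eq_abs,
              abs_of_nonneg hη0, abs_of_nonneg (by linarith : (0:ℝ) ≤ 1 - η)]
        _ ≤ η * ‖x1 n - x2 n‖ + (1-η) * γ M := by nlinarith
    rcases Nat.eq_zero_or_pos n with hn | hn
    · subst hn
      have h0 : ‖x1 0 - x2 0‖ = ‖ξ₁ - ξ₂‖ := by rw [hx10, hx20]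
      rw [h0] at step
      have : η * ‖ξ₁ - ξ₂‖ + (1-η) * γ M ≤ η ^ 1 * ‖ξ₁ - ξ₂‖ + γ M := by
        rw [pow_one]; nlinarith
      exact le_trans step this
    · have ihn := ih hn
      have hne' : (Finset.range n).Nonempty := Finset.nonempty_range_iff.mpr hn.ne'
      set M' := (Finset.range n).sup' (Finset.nonempty_range_iff.mpr hn.ne')
        (fun k => ‖h (x1 k) + u k‖) with hM'def
      have hM'M : M' ≤ M := by
        apply Finset.sup'_le
        intro k hk
        exact hMle k (lt_trans (Finset.mem_range.mp hk) (lt_add_one n))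
      have hM'0 : 0 ≤ M' := by
        rw [hM'def]
        exact le_trans (norm_nonneg (h (x1 0) + u 0)) (Finset.le_sup' (fun k => ‖h (x1 k) + u k‖) (Finset.mem_range.mpr hn))
      have hγM'M : γ M' ≤ γ M :=
        hmono' (Set.mem_Ici.mpr hM'0) (Set.mem_Ici.mpr hM0) hM'M
      have hξnn : (0:ℝ) ≤ ‖ξ₁ - ξ₂‖ := norm_nonneg _
      have hpow : (0:ℝ) ≤ η ^ n := pow_nonneg hη0 n
      calc ‖x1 (n+1) - x2 (n+1)‖ ≤ η * ‖x1 n - x2 n‖ + (1-η) * γ M := step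
        _ ≤ η * (η ^ n * ‖ξ₁ - ξ₂‖ + γ M') + (1-η) * γ M := by nlinarith
        _ ≤ η ^ (n+1) * ‖ξ₁ - ξ₂‖ + γ M := by rw [pow_succ]; nlinarith
end
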